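/- Let V and W be finite-dimensional real vector spaces, φ : V → W linear and surjective, and C ⊆ V a closed convex cone with C ∩ ker φ = {0}. Then φ restricted to C is a proper map and φ(C) is a closed convex cone in W. -/

import Mathlib

/-!
On the unit sphere, which is compact in finite dimension, the continuous function `‖φ x‖` is
positive on the closed set `C ∩ S` because `C` meets `ker φ` only at `0`; hence it is bounded
below there by some `ε > 0`, and by homogeneity `ε ‖x‖ ≤ ‖φ x‖` on all of `C`. This coercivity
bound makes `C ∩ φ⁻¹ K` bounded, hence compact, for every compact `K`; so `φ` restricted to `C`
is a proper map and its range `φ(C)` is closed. Convexity and the cone property pass to linear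
images.
-/

open Set Metric

theorem ConvexCone.exists_pos_mul_norm_le_norm_map {V W : Type*} [NormedAddCommGroup V]
    [NormedSpace ℝ V] [FiniteDimensional ℝ V] [NormedAddCommGroup W] [NormedSpace ℝ W]
    (φ : V →ₗ[ℝ] W) (C : ConvexCone ℝ V) (hC : IsClosed (C : Set V))
    (hker : ∀ x ∈ C, φ x = 0 → x = 0) :
    ∃ ε > 0, ∀ x ∈ C, ε * ‖x‖ ≤ ‖φ x‖ := by
  have hS : IsCompact ((C : Set V) ∩ sphere 0 1) := (isCompact_sphere 0 1).inter_left hC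
  have hpos : ∀ x ∈ (C : Set V) ∩ sphere 0 1, 0 < ‖φ x‖ := fun x ⟨hxC, hx1⟩ =>
    norm_pos_iff.2 fun h0 => ne_zero_of_mem_unit_sphere ⟨x, hx1⟩ (hker x hxC h0)
  obtain ⟨ε, hε, hεS⟩ :=
    hS.exists_forall_le' φ.continuous_of_finiteDimensional.norm.continuousOn hpos
  refine ⟨ε, hε, fun x hx => ?_⟩
  rcases eq_or_ne x 0 with rfl | hx0
  · simp
  have hnx : 0 < ‖x‖ := norm_pos_iff.2 hx0
  have hunit := hεS (‖x‖⁻¹ • x) ⟨C.smul_mem (inv_pos.2 hnx) hx, by simp [norm_smul, hnx.ne']⟩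
  rw [map_smul, norm_smul, norm_inv, norm_norm, inv_mul_eq_div, le_div_iff₀ hnx] at hunit
  linarith

theorem isCompact_inter_preimage_of_mul_norm_le {E F : Type*} [NormedAddCommGroup E]
    [ProperSpace E] [NormedAddCommGroup F] {f : E → F} (hf : Continuous f) {s : Set E}
    (hs : IsClosed s) {ε : ℝ} (hε : 0 < ε) (hbound : ∀ x ∈ s, ε * ‖x‖ ≤ ‖f x‖)
    {K : Set F} (hK : IsCompact K) : IsCompact (s ∩ f ⁻¹' K) := by
  obtain ⟨R, hR⟩ := hK.isBounded.subset_closedBall 0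
  refine (isCompact_closedBall (0 : E) (R / ε)).of_isClosed_subset
    (hs.inter (hK.isClosed.preimage hf)) fun x ⟨hxs, hxK⟩ => ?_
  rw [mem_closedBall_zero_iff, le_div_iff₀ hε, mul_comm]
  exact (hbound x hxs).trans (mem_closedBall_zero_iff.1 (hR hxK))

theorem isClosed_image_of_isCompact_inter_preimage {X Y : Type*} [TopologicalSpace X]
    [TopologicalSpace Y] [T2Space Y] [CompactlyCoherentSpace Y] {f : X → Y} (hf : Continuous f)
    {s : Set X} (hproper : ∀ K, IsCompact K → IsCompact (s ∩ f ⁻¹' K)) :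
    IsClosed (f '' s) := by
  have : IsProperMap (s.domRestrict f) := isProperMap_iff_isCompact_preimage.2
    ⟨hf.comp continuous_subtype_val, fun K hK => by
      rw [Subtype.isCompact_iff, domRestrict_eq, preimage_comp, Subtype.image_preimage_coe]
      exact hproper K hK⟩
  simpa only [range_domRestrict] using this.isClosed_range

theorem stmt_10_general (V W : Type*) [NormedAddCommGroup V] [NormedSpace ℝ V]
    [FiniteDimensional ℝ V] [NormedAddCommGroup W] [NormedSpace ℝ W]
    (φ : V →ₗ[ℝ] W)
    (C : ConvexCone ℝ V) (hCclosed : IsClosed (C : Set V))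
    (hker : (C : Set V) ∩ (LinearMap.ker φ : Set V) = {0}) :
    (∀ K : Set W, IsCompact K → IsCompact ((C : Set V) ∩ φ ⁻¹' K)) ∧
    IsClosed (φ '' (C : Set V)) ∧
    Convex ℝ (φ '' (C : Set V)) ∧
    (∀ c : ℝ, 0 < c → ∀ x ∈ φ '' (C : Set V), c • x ∈ φ '' (C : Set V)) := by
  have hφ : Continuous φ := φ.continuous_of_finiteDimensional
  obtain ⟨ε, hε, hbound⟩ :=
    C.exists_pos_mul_norm_le_norm_map φ hCclosed fun x hx h0 => hker.subset ⟨hx, h0⟩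
  have hproper : ∀ K : Set W, IsCompact K → IsCompact ((C : Set V) ∩ φ ⁻¹' K) :=
    fun K hK => isCompact_inter_preimage_of_mul_norm_le hφ hCclosed hε hbound hK
  refine ⟨hproper, isClosed_image_of_isCompact_inter_preimage hφ hproper,
    C.convex.linear_image φ, ?_⟩
  rintro c hc _ ⟨x, hx, rfl⟩
  exact ⟨c • x, C.smul_mem hc hx, map_smul φ c x⟩

/-- If `φ : V → W` is a surjective linear map between finite-dimensional real vector
spaces and `C` is a closed convex cone with `C ∩ ker φ = {0}`, then `φ` is proper on `C`
and `φ(C)` is a closed convex cone in `W`. -/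
theorem stmt_10 (V W : Type*) [NormedAddCommGroup V] [NormedSpace ℝ V]
    [FiniteDimensional ℝ V] [NormedAddCommGroup W] [NormedSpace ℝ W]
    [FiniteDimensional ℝ W]
    (φ : V →ₗ[ℝ] W) (hsurj : Function.Surjective φ)
    (C : ConvexCone ℝ V) (hCclosed : IsClosed (C : Set V))
    (hker : (C : Set V) ∩ (LinearMap.ker φ : Set V) = {0}) :
    (∀ K : Set W, IsCompact K → IsCompact ((C : Set V) ∩ φ ⁻¹' K)) ∧
    IsClosed (φ '' (C : Set V)) ∧
    Convex ℝ (φ '' (C : Set V)) ∧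
    (∀ c : ℝ, 0 < c → ∀ x ∈ φ '' (C : Set V), c • x ∈ φ '' (C : Set V)) :=
  stmt_10_general V W φ C hCclosed hker
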